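/- Counting colorings by their monochromatic edge sets: Let G = (V, E, ε) be a finite multigraph, q a positive integer, and A ⊆ E. Then q^{k_G(A)} = ∑_{B with A ⊆ B ⊆ E} χ(G/B; q), where χ(G/B; q) is the number of maps ω : V → Fin q that are constant on each connected component of (V, B) and satisfy ω(x) ≠ ω(y) for every edge e ∈ E∖B with ε(e) = ⟦(x, y)⟧. (Here q^{k_G(A)} counts the q-colorings of V that are constant on each connected component of (V, A).) -/

import Mathlib

open Finset

/-- The number of connected components of the spanning subgraph `(V, A)` of the
multigraph given by `ε : E → Sym2 V`. -/
noncomputable def multigraphComponents {V E : Type*} (ε : E → Sym2 V) (A : Finset E) : ℕ :=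
  Nat.card (SimpleGraph.fromEdgeSet (ε '' (A : Set E))).ConnectedComponent

/-- The number of proper `q`-colorings of the contraction `G/B` of the multigraph given
by `ε : E → Sym2 V`: maps `ω : V → Fin q` constant on each connected component of the
spanning subgraph `(V, B)` with `ω x ≠ ω y` for every edge `e ∈ E ∖ B` with endpoints
`x, y`. -/
noncomputable def contractionColoringCount {V E : Type*} (ε : E → Sym2 V) (B : Finset E)
    (q : ℕ) : ℕ :=
  Nat.card {ω : V → Fin q //
    (∀ x y : V, (SimpleGraph.fromEdgeSet (ε '' (B : Set E))).Reachable x y → ω x = ω y) ∧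
    ∀ e ∉ B, ∀ x y : V, ε e = s(x, y) → ω x ≠ ω y}

/-!
A coloring `f : V → Fin q` that is constant on the components of `(V, A)` is exactly one whose
set `B` of monochromatic edges contains `A`. Grouping such colorings by `B`, the colorings with
monochromatic edge set exactly `B` are those constant on the components of `(V, B)` and proper
on every edge outside `B`, i.e. the proper colorings of `G/B`.
-/

namespace Sym2

variable {V α : Type*}

theorem isDiag_map_iff_forall (f : V → α) (z : Sym2 V) :
    (z.map f).IsDiag ↔ ∀ x y, z = s(x, y) → f x = f y := by
  induction z using Sym2.ind with
  | _ a b =>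
    simp only [map_mk, mk_isDiag_iff, Sym2.eq_iff]
    constructor
    · rintro h x y (⟨rfl, rfl⟩ | ⟨rfl, rfl⟩)
      exacts [h, h.symm]
    · exact fun h => h a b (.inl ⟨rfl, rfl⟩)

theorem not_isDiag_map_iff_forall (f : V → α) (z : Sym2 V) :
    ¬(z.map f).IsDiag ↔ ∀ x y, z = s(x, y) → f x ≠ f y := by
  induction z using Sym2.ind with
  | _ a b =>
    rw [isDiag_map_iff_forall]
    constructor
    · intro h x y hxy hfxy
      refine h fun u v huv => ?_
      rcases Sym2.eq_iff.mp (hxy.symm.trans huv) with ⟨rfl, rfl⟩ | ⟨rfl, rfl⟩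
      exacts [hfxy, hfxy.symm]
    · exact fun h hall => h a b rfl (hall a b rfl)

end Sym2

namespace SimpleGraph

variable {V α : Type*}

theorem forall_reachable_imp_eq_iff (G : SimpleGraph V) (f : V → α) :
    (∀ x y, G.Reachable x y → f x = f y) ↔ ∀ x y, G.Adj x y → f x = f y := by
  refine ⟨fun h x y hxy => h x y hxy.reachable, fun h x y hxy => ?_⟩
  rw [reachable_iff_reflTransGen] at hxy
  have hf := Relation.ReflTransGen.lift f h x y hxy
  rwa [Function.onFun, Relation.reflTransGen_eq_self] at hf

theorem natCard_forall_reachable_imp_eq [Finite V] (G : SimpleGraph V) :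
    Nat.card {f : V → α // ∀ x y, G.Reachable x y → f x = f y} =
      Nat.card α ^ Nat.card G.ConnectedComponent :=
  (Nat.card_congr (Setoid.liftEquiv G.reachableSetoid)).trans Nat.card_fun

end SimpleGraph

section Multigraph

variable {V E α : Type*} (ε : E → Sym2 V)

theorem forall_reachable_fromEdgeSet_imp_eq_iff (B : Set E) (f : V → α) :
    (∀ x y, (SimpleGraph.fromEdgeSet (ε '' B)).Reachable x y → f x = f y) ↔
      ∀ e ∈ B, ((ε e).map f).IsDiag := by
  simp only [SimpleGraph.forall_reachable_imp_eq_iff, SimpleGraph.fromEdgeSet_adj,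
    Set.mem_image, Sym2.isDiag_map_iff_forall]
  constructor
  · intro h e he x y hxy
    by_cases hne : x = y
    · rw [hne]
    · exact h x y ⟨⟨e, he, hxy⟩, hne⟩
  · rintro h x y ⟨⟨e, he, hxy⟩, -⟩
    exact h e he x y hxy

variable [Fintype E] [DecidableEq α]

def monochromaticEdges (f : V → α) : Finset E :=
  {e | ((ε e).map f).IsDiag}

@[simp]
theorem mem_monochromaticEdges {f : V → α} {e : E} :
    e ∈ monochromaticEdges ε f ↔ ((ε e).map f).IsDiag := by
  simp [monochromaticEdges]

theorem contractionColoringCount_eq_card_filter [Fintype V] [DecidableEq V] [DecidableEq E]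
    (B : Finset E) (q : ℕ) :
    contractionColoringCount ε B q = #{f : V → Fin q | monochromaticEdges ε f = B} := by
  classical
  rw [contractionColoringCount, Nat.card_eq_fintype_card, Fintype.card_subtype]
  congr 1
  ext f
  simp only [mem_filter, mem_univ, true_and, forall_reachable_fromEdgeSet_imp_eq_iff,
    ← Sym2.not_isDiag_map_iff_forall, Finset.ext_iff, mem_monochromaticEdges, mem_coe]
  constructor
  · rintro ⟨hmono, hproper⟩ e
    exact ⟨fun hdiag => not_not.mp fun he => hproper e he hdiag, hmono e⟩
  · intro h
    exact ⟨fun e => (h e).mpr, fun e he hdiag => he ((h e).mp hdiag)⟩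

theorem pow_multigraphComponents_eq_card_filter [Fintype V] [DecidableEq V] [DecidableEq E]
    (A : Finset E) (q : ℕ) :
    q ^ multigraphComponents ε A = #{f : V → Fin q | A ⊆ monochromaticEdges ε f} := by
  classical
  conv_lhs => rw [multigraphComponents, ← Nat.card_fin q]
  rw [← SimpleGraph.natCard_forall_reachable_imp_eq, Nat.card_eq_fintype_card,
    Fintype.card_subtype]
  congr 1
  ext f
  simp only [mem_filter, mem_univ, true_and, forall_reachable_fromEdgeSet_imp_eq_iff, mem_coe,
    subset_iff, mem_monochromaticEdges]

end Multigraph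

theorem colorings_by_monochromatic_edges_general {V E : Type*} [Fintype V] [Fintype E]
    [DecidableEq E] (ε : E → Sym2 V) (q : ℕ) (A : Finset E) :
    q ^ multigraphComponents ε A =
      ∑ B ∈ Finset.univ.powerset.filter (fun B => A ⊆ B),
        contractionColoringCount ε B q := by
  classical
  rw [pow_multigraphComponents_eq_card_filter,
    card_eq_sum_card_fiberwise (f := monochromaticEdges ε)]
  · refine sum_congr rfl fun B hB => ?_
    have hAB : A ⊆ B := (mem_filter.mp hB).2
    rw [contractionColoringCount_eq_card_filter, filter_filter]
    exact congrArg card <| filter_congr fun f _ => and_iff_right_of_imp fun hf => hf ▸ hAB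
  · intro f hf
    simpa using (mem_filter.mp hf).2

/-- Counting colorings by their monochromatic edge sets:
`q^{k_G(A)} = ∑_{A ⊆ B ⊆ E} χ(G/B;q)`. -/
theorem colorings_by_monochromatic_edges {V E : Type*} [Fintype V] [Fintype E]
    [DecidableEq E] (ε : E → Sym2 V) (q : ℕ) (hq : 0 < q) (A : Finset E) :
    q ^ multigraphComponents ε A =
      ∑ B ∈ Finset.univ.powerset.filter (fun B => A ⊆ B),
        contractionColoringCount ε B q :=
  colorings_by_monochromatic_edges_general ε q A
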